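/- Let a > 0, b ∈ ℝ, σ > 0, let f₀(x) = √(a/(π σ²)) · exp(−a(x − b)²/σ²) be the N(b, σ²/(2a)) density with distribution function F₀(x) = ∫_{−∞}^{x} f₀(y) dy, and define Φ(x) = ∫_ℝ (𝟙{y > x} − F₀(y))² / (σ² f₀(y)) dy. Then lim_{x → ∞} (x − b) · exp(−a(x − b)²/σ²) · Φ(x) = σ√π/(2 a^{3/2}). -/

import Mathlib

/-!
Put `k = a / σ²`, so that `f₀ y = √(k/π) e^{-k(y-b)²}`. For each `x` the integrand of `Φ x`
is `F₀² / (σ² f₀)` on `y ≤ x` and `(1 - F₀)² / (σ² f₀)` on `y > x`. The Mills-ratio bounds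
`F₀ y ≤ f₀ y / (2k)` for `y ≤ b - 1` and `1 - F₀ y ≤ f₀ y / (2k)` for `y ≥ b + 1` dominate
both pieces by a multiple of `f₀` in the tails, so `Φ x` is finite and the part over `y > x`
tends to `0`.

On `y ≤ x` the integrand is `(σ² √(k/π))⁻¹ F₀(y)² e^{k(y-b)²}` with `F₀² → 1`, and
`e^{k(y-b)²}` is asymptotic to the derivative of `H y = e^{k(y-b)²} / (2k(y-b))`. Integrals
of asymptotically equivalent nonnegative functions with divergent integrals are asymptotically
equivalent, so `∫_{-∞}^x F₀² e^{k(y-b)²} ~ H x`. Since `(x - b) e^{-k(x-b)²} H x = 1/(2k)`,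
the limit is `(σ² √(k/π))⁻¹ / (2k) = σ √π / (2 a^{3/2})`.
-/

open MeasureTheory Set Filter Topology ENNReal Asymptotics Real

theorem Asymptotics.IsLittleO.intervalIntegral_atTop {f g : ℝ → ℝ} {a : ℝ}
    (hfg : f =o[atTop] g) (hf : ∀ x ≥ a, IntervalIntegrable f volume a x)
    (hg : ∀ x ≥ a, IntervalIntegrable g volume a x) (hg_nonneg : ∀ᶠ y in atTop, 0 ≤ g y)
    (hg_top : Tendsto (fun x => ∫ y in a..x, g y) atTop atTop) :
    (fun x => ∫ y in a..x, f y) =o[atTop] fun x => ∫ y in a..x, g y := by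
  refine IsLittleO.of_bound fun ε hε => ?_
  obtain ⟨N, hN⟩ := eventually_atTop.1 <|
    (hfg.bound (half_pos hε)).and (hg_nonneg.and (eventually_ge_atTop a))
  have haN : a ≤ N := (hN N le_rfl).2.2
  -- Past `N` we have `‖f‖ ≤ ε/2 · g`; the part over `[a, N]` is a constant `≤ C`, absorbed by
  -- the other `ε/2` once `∫ g ≥ 2C/ε`.
  set C := ‖∫ y in a..N, f y‖ + ε / 2 * ‖∫ y in a..N, g y‖ with hC_def
  filter_upwards [eventually_ge_atTop N, hg_top.eventually_ge_atTop (2 * C / ε)] with x hNx hCx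
  have hN_mem : N ∈ uIcc a x := by rw [uIcc_of_le (haN.trans hNx)]; exact ⟨haN, hNx⟩
  have hfx := hf x (haN.trans hNx)
  have hgx := hg x (haN.trans hNx)
  have h_tail : ‖∫ y in N..x, f y‖ ≤ ε / 2 * ∫ y in N..x, g y := by
    rw [← intervalIntegral.integral_const_mul]
    refine intervalIntegral.norm_integral_le_of_norm_le hNx (ae_of_all _ fun y hy => ?_)
      ((hgx.mono_set (uIcc_subset_uIcc hN_mem right_mem_uIcc)).const_mul _)
    simpa [abs_of_nonneg (hN y hy.1.le).2.1] using (hN y hy.1.le).1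
  have hsplit_f := intervalIntegral.integral_add_adjacent_intervals
    (hfx.mono_set (uIcc_subset_uIcc left_mem_uIcc hN_mem))
    (hfx.mono_set (uIcc_subset_uIcc hN_mem right_mem_uIcc))
  have hsplit_g := intervalIntegral.integral_add_adjacent_intervals
    (hgx.mono_set (uIcc_subset_uIcc left_mem_uIcc hN_mem))
    (hgx.mono_set (uIcc_subset_uIcc hN_mem right_mem_uIcc))
  have hC : C ≤ ε / 2 * ∫ y in a..x, g y := by
    rw [div_le_iff₀ hε] at hCx; linarith
  have hG_nonneg : 0 ≤ ∫ y in a..x, g y :=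
    nonneg_of_mul_nonneg_right ((by positivity : 0 ≤ C).trans hC) (half_pos hε)
  rw [← hsplit_f, Real.norm_of_nonneg hG_nonneg]
  calc ‖(∫ y in a..N, f y) + ∫ y in N..x, f y‖
      ≤ ‖∫ y in a..N, f y‖ + ε / 2 * ∫ y in N..x, g y :=
        (norm_add_le _ _).trans (by gcongr)
    _ ≤ C + ε / 2 * ∫ y in a..x, g y := by
      rw [← hsplit_g, mul_add]
      have : 0 ≤ ε / 2 * (‖∫ y in a..N, g y‖ + ∫ y in a..N, g y) :=
        mul_nonneg (half_pos hε).le (neg_le_iff_add_nonneg.1 (neg_le_abs _))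
      rw [hC_def]
      linarith
    _ ≤ ε * ∫ y in a..x, g y := by linarith

theorem Asymptotics.IsEquivalent.intervalIntegral_atTop {f g : ℝ → ℝ} {a : ℝ}
    (hfg : f ~[atTop] g) (hf : ∀ x ≥ a, IntervalIntegrable f volume a x)
    (hg : ∀ x ≥ a, IntervalIntegrable g volume a x) (hg_nonneg : ∀ᶠ y in atTop, 0 ≤ g y)
    (hg_top : Tendsto (fun x => ∫ y in a..x, g y) atTop atTop) :
    (fun x => ∫ y in a..x, f y) ~[atTop] fun x => ∫ y in a..x, g y := by
  refine (hfg.isLittleO.intervalIntegral_atTop (fun x hx => (hf x hx).sub (hg x hx)) hg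
    hg_nonneg hg_top).congr' ?_ EventuallyEq.rfl
  filter_upwards [eventually_ge_atTop a] with x hx
  exact intervalIntegral.integral_sub (hf x hx) (hg x hx)

theorem Filter.Tendsto.isEquivalent_mul_left {α β : Type*} [NormedField β] {l : Filter α}
    {u v : α → β} (hu : Tendsto u l (𝓝 1)) : (fun x => u x * v x) ~[l] v :=
  (((isEquivalent_const_iff_tendsto one_ne_zero).2 hu).mul IsEquivalent.refl).congr_right
    (.of_forall fun x => one_mul (v x))

theorem tendsto_integral_Iic_atTop {f : ℝ → ℝ} (hf : Integrable f) :
    Tendsto (fun x => ∫ y in Iic x, f y) atTop (𝓝 (∫ y, f y)) :=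
  (aecover_Iic tendsto_id).integral_tendsto_of_countably_generated hf

theorem MeasureTheory.Integrable.continuous_integral_Iic {f : ℝ → ℝ} (hf : Integrable f) :
    Continuous fun x => ∫ y in Iic x, f y :=
  continuous_iff_continuousAt.2 fun x =>
    hf.integrableOn.continuousOn_Iic_primitive_Iic.continuousAt (Iic_mem_nhds (lt_add_one x))

theorem integrableOn_Iic_of_continuous_of_le_atBot {g h : ℝ → ℝ} (hg : Continuous g)
    (hh : Integrable h) (hgh : ∀ᶠ y in atBot, ‖g y‖ ≤ h y) (x : ℝ) :
    IntegrableOn g (Iic x) :=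
  integrableOn_Iic_iff_integrableAtFilter_atBot.2
    ⟨(IsBigO.of_bound' (hgh.mono fun _ hy => hy.trans (Real.le_norm_self _))).integrableAtFilter
      (hg.stronglyMeasurableAtFilter _ _) (hh.integrableAtFilter _),
     hg.continuousOn.locallyIntegrableOn measurableSet_Iic⟩

theorem integrableOn_Ioi_of_continuous_of_le_atTop {g h : ℝ → ℝ} (hg : Continuous g)
    (hh : Integrable h) (hgh : ∀ᶠ y in atTop, ‖g y‖ ≤ h y) (x : ℝ) :
    IntegrableOn g (Ioi x) :=
  (integrableOn_Ici_iff_integrableAtFilter_atTop.2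
    ⟨(IsBigO.of_bound' (hgh.mono fun _ hy => hy.trans (Real.le_norm_self _))).integrableAtFilter
      (hg.stronglyMeasurableAtFilter _ _) (hh.integrableAtFilter _),
     hg.continuousOn.locallyIntegrableOn measurableSet_Ici⟩).mono_set Ioi_subset_Ici_self

theorem toReal_lintegral_ofReal_indicator_sub_sq_div {F w : ℝ → ℝ} (hw : ∀ y, 0 ≤ w y)
    {x : ℝ} (hL : IntegrableOn (fun y => F y ^ 2 / w y) (Iic x))
    (hR : IntegrableOn (fun y => (1 - F y) ^ 2 / w y) (Ioi x)) :
    (∫⁻ y, ENNReal.ofReal (((Ioi x).indicator (fun _ => (1 : ℝ)) y - F y) ^ 2 / w y)).toReal =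
      (∫ y in Iic x, F y ^ 2 / w y) + ∫ y in Ioi x, (1 - F y) ^ 2 / w y := by
  set g := fun y => ((Ioi x).indicator (fun _ => (1 : ℝ)) y - F y) ^ 2 / w y
  have hgL : EqOn g (fun y => F y ^ 2 / w y) (Iic x) := fun y hy => by
    simp only [g, indicator_of_notMem (notMem_Ioi.2 (mem_Iic.1 hy)), zero_sub, neg_sq]
  have hgR : EqOn g (fun y => (1 - F y) ^ 2 / w y) (Ioi x) := fun y hy => by
    simp only [g, indicator_of_mem hy]
  have hgL_int := hL.congr_fun hgL.symm measurableSet_Iic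
  have hgR_int := hR.congr_fun hgR.symm measurableSet_Ioi
  have hg_int : Integrable g := by
    simpa only [Iic_union_Ioi, integrableOn_univ] using hgL_int.union hgR_int
  have hg_nonneg : ∀ y, 0 ≤ g y := fun y => div_nonneg (sq_nonneg _) (hw y)
  rw [← ofReal_integral_eq_lintegral_ofReal hg_int (ae_of_all _ hg_nonneg),
    ENNReal.toReal_ofReal (integral_nonneg hg_nonneg),
    ← intervalIntegral.integral_Iic_add_Ioi hgL_int hgR_int,
    setIntegral_congr_fun measurableSet_Iic hgL, setIntegral_congr_fun measurableSet_Ioi hgR]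

section GaussianTail

variable {k b : ℝ}

theorem integrable_exp_neg_mul_sq_sub (hk : 0 < k) (b : ℝ) :
    Integrable fun t => exp (-k * (t - b) ^ 2) :=
  (integrable_exp_neg_mul_sq hk).comp_sub_right b

theorem integrable_sub_mul_exp_neg_mul_sq_sub (hk : 0 < k) (b : ℝ) :
    Integrable fun t => (t - b) * exp (-k * (t - b) ^ 2) :=
  (integrable_mul_exp_neg_mul_sq hk).comp_sub_right b

theorem tendsto_rpow_abs_sub_mul_exp_neg_mul_sq_sub_cocompact (hk : 0 < k) (b s : ℝ) :
    Tendsto (fun t => |t - b| ^ s * exp (-k * (t - b) ^ 2)) (cocompact ℝ) (𝓝 0) :=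
  (tendsto_rpow_abs_mul_exp_neg_mul_sq_cocompact hk s).comp
    (Homeomorph.subRight b).isClosedEmbedding.tendsto_cocompact

theorem tendsto_exp_neg_mul_sq_sub_cocompact (hk : 0 < k) (b : ℝ) :
    Tendsto (fun t => exp (-k * (t - b) ^ 2)) (cocompact ℝ) (𝓝 0) := by
  simpa only [Real.rpow_zero, one_mul] using
    tendsto_rpow_abs_sub_mul_exp_neg_mul_sq_sub_cocompact hk b 0

theorem tendsto_sub_mul_exp_neg_mul_sq_sub_atTop (hk : 0 < k) (b : ℝ) :
    Tendsto (fun t => (t - b) * exp (-k * (t - b) ^ 2)) atTop (𝓝 0) := by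
  refine ((tendsto_rpow_abs_sub_mul_exp_neg_mul_sq_sub_cocompact hk b 1).mono_left
    atTop_le_cocompact).congr' ?_
  filter_upwards [eventually_ge_atTop b] with t ht
  rw [Real.rpow_one, abs_of_nonneg (sub_nonneg.2 ht)]

theorem hasDerivAt_exp_neg_mul_sq_sub_div (hk : k ≠ 0) (t : ℝ) :
    HasDerivAt (fun t => exp (-k * (t - b) ^ 2) / (2 * k))
      (-((t - b) * exp (-k * (t - b) ^ 2))) t := by
  have h_sq : HasDerivAt (fun t => -k * (t - b) ^ 2) (-k * (2 * (t - b))) t := by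
    simpa using (((hasDerivAt_id t).sub_const b).pow 2).const_mul (-k)
  refine (h_sq.exp.div_const (2 * k)).congr_deriv ?_
  field_simp

theorem integral_Ioi_exp_neg_mul_sq_sub_le (hk : 0 < k) {y : ℝ} (hy : b + 1 ≤ y) :
    ∫ t in Ioi y, exp (-k * (t - b) ^ 2) ≤ exp (-k * (y - b) ^ 2) / (2 * k) := by
  calc ∫ t in Ioi y, exp (-k * (t - b) ^ 2)
      ≤ ∫ t in Ioi y, (t - b) * exp (-k * (t - b) ^ 2) := by
        refine setIntegral_mono_on (integrable_exp_neg_mul_sq_sub hk b).integrableOn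
          (integrable_sub_mul_exp_neg_mul_sq_sub hk b).integrableOn measurableSet_Ioi
          fun t ht => le_mul_of_one_le_left (exp_pos _).le ?_
        linarith [mem_Ioi.1 ht]
    _ = exp (-k * (y - b) ^ 2) / (2 * k) := by
        rw [integral_Ioi_of_hasDerivAt_of_tendsto'
          (f := fun t => -(exp (-k * (t - b) ^ 2) / (2 * k)))
          (fun t _ => by
            simpa only [neg_neg] using (hasDerivAt_exp_neg_mul_sq_sub_div hk.ne' t).fun_neg)
          (integrable_sub_mul_exp_neg_mul_sq_sub hk b).integrableOn
          (by simpa using (((tendsto_exp_neg_mul_sq_sub_cocompact hk b).mono_left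
            atTop_le_cocompact).div_const (2 * k)).neg)]
        ring

theorem integral_Iic_exp_neg_mul_sq_sub_le (hk : 0 < k) {y : ℝ} (hy : y ≤ b - 1) :
    ∫ t in Iic y, exp (-k * (t - b) ^ 2) ≤ exp (-k * (y - b) ^ 2) / (2 * k) := by
  calc ∫ t in Iic y, exp (-k * (t - b) ^ 2)
      ≤ ∫ t in Iic y, -((t - b) * exp (-k * (t - b) ^ 2)) := by
        refine setIntegral_mono_on (integrable_exp_neg_mul_sq_sub hk b).integrableOn
          (integrable_sub_mul_exp_neg_mul_sq_sub hk b).neg.integrableOn measurableSet_Iic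
          fun t ht => ?_
        rw [← neg_mul]
        refine le_mul_of_one_le_left (exp_pos _).le ?_
        linarith [mem_Iic.1 ht]
    _ = exp (-k * (y - b) ^ 2) / (2 * k) := by
        rw [integral_Iic_of_hasDerivAt_of_tendsto'
          (fun t _ => hasDerivAt_exp_neg_mul_sq_sub_div hk.ne' t)
          (integrable_sub_mul_exp_neg_mul_sq_sub hk b).neg.integrableOn
          (by simpa using ((tendsto_exp_neg_mul_sq_sub_cocompact hk b).mono_left
            atBot_le_cocompact).div_const (2 * k))]
        ring

end GaussianTail

section GaussianGrowth

variable {k b : ℝ}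

theorem hasDerivAt_exp_mul_sq_div (hk : k ≠ 0) {x : ℝ} (hx : x ≠ b) :
    HasDerivAt (fun x => exp (k * (x - b) ^ 2) / (2 * k * (x - b)))
      ((1 - 1 / (2 * k * (x - b) ^ 2)) * exp (k * (x - b) ^ 2)) x := by
  have hxb : x - b ≠ 0 := sub_ne_zero.2 hx
  have h_sq : HasDerivAt (fun x => k * (x - b) ^ 2) (k * (2 * (x - b))) x := by
    simpa using (((hasDerivAt_id x).sub_const b).pow 2).const_mul k
  have h_lin : HasDerivAt (fun x => 2 * k * (x - b)) (2 * k) x := by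
    simpa using ((hasDerivAt_id x).sub_const b).const_mul (2 * k)
  refine (h_sq.exp.div h_lin (by positivity)).congr_deriv ?_
  field_simp

theorem tendsto_exp_mul_sq_div_atTop (hk : 0 < k) :
    Tendsto (fun x => exp (k * (x - b) ^ 2) / (2 * k * (x - b))) atTop atTop := by
  refine tendsto_atTop_mono' _ ?_
    ((tendsto_atTop_add_const_right _ (-b) tendsto_id).atTop_div_const two_pos)
  filter_upwards [eventually_gt_atTop b] with x hx
  have hxb : 0 < x - b := sub_pos.2 hx
  rw [id, le_div_iff₀ (by positivity)]
  nlinarith [add_one_le_exp (k * (x - b) ^ 2)]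

theorem isEquivalent_one_sub_div_mul_exp_mul_sq (hk : 0 < k) :
    (fun y => (1 - 1 / (2 * k * (y - b) ^ 2)) * exp (k * (y - b) ^ 2)) ~[atTop]
      fun y => exp (k * (y - b) ^ 2) := by
  have h_top : Tendsto (fun y => 2 * k * (y - b) ^ 2) atTop atTop :=
    ((tendsto_pow_atTop two_ne_zero).comp
      (tendsto_atTop_add_const_right atTop (-b) tendsto_id)).const_mul_atTop (by positivity)
  refine Tendsto.isEquivalent_mul_left ?_
  simpa using tendsto_const_nhds.sub (tendsto_const_nhds (x := (1 : ℝ)).div_atTop h_top)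

theorem intervalIntegrable_one_sub_div_mul_exp_mul_sq (hk : k ≠ 0) {a x : ℝ} (hba : b < a)
    (hax : a ≤ x) :
    IntervalIntegrable (fun y => (1 - 1 / (2 * k * (y - b) ^ 2)) * exp (k * (y - b) ^ 2))
      volume a x := by
  refine ContinuousOn.intervalIntegrable <| (continuousOn_const.sub <| continuousOn_const.div
    (by fun_prop) fun y hy => mul_ne_zero (by positivity) (pow_ne_zero 2 ?_)).mul (by fun_prop)
  rw [uIcc_of_le hax] at hy
  linarith [hy.1]

theorem integral_one_sub_div_mul_exp_mul_sq (hk : k ≠ 0) {a x : ℝ} (hba : b < a)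
    (hax : a ≤ x) :
    ∫ y in a..x, (1 - 1 / (2 * k * (y - b) ^ 2)) * exp (k * (y - b) ^ 2) =
      exp (k * (x - b) ^ 2) / (2 * k * (x - b)) - exp (k * (a - b) ^ 2) / (2 * k * (a - b)) := by
  refine intervalIntegral.integral_eq_sub_of_hasDerivAt
    (fun y hy => hasDerivAt_exp_mul_sq_div hk ?_)
    (intervalIntegrable_one_sub_div_mul_exp_mul_sq hk hba hax)
  rw [uIcc_of_le hax] at hy
  linarith [hy.1]

theorem isEquivalent_integral_Iic_mul_exp_mul_sq (hk : 0 < k) {W : ℝ → ℝ}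
    (hW : Tendsto W atTop (𝓝 1))
    (hint : ∀ x, IntegrableOn (fun y => W y * exp (k * (y - b) ^ 2)) (Iic x)) :
    (fun x => ∫ y in Iic x, W y * exp (k * (y - b) ^ 2)) ~[atTop]
      fun x => exp (k * (x - b) ^ 2) / (2 * k * (x - b)) := by
  set E := fun y => exp (k * (y - b) ^ 2)
  set H := fun y => E y / (2 * k * (y - b))
  set H' := fun y => (1 - 1 / (2 * k * (y - b) ^ 2)) * E y
  have hH_top : Tendsto (norm ∘ H) atTop atTop :=
    tendsto_norm_atTop_atTop.comp (tendsto_exp_mul_sq_div_atTop hk)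
  have hb : b < b + 1 := lt_add_one b
  have hWE_int : ∀ x ≥ b + 1, IntervalIntegrable (fun y => W y * E y) volume (b + 1) x :=
    fun x hx => (intervalIntegrable_iff_integrableOn_Ioc_of_le hx).2
      ((hint x).mono_set Ioc_subset_Iic_self)
  have hH'_nonneg : ∀ᶠ y in atTop, 0 ≤ H' y :=
    (isEquivalent_one_sub_div_mul_exp_mul_sq hk).eventually_nonneg
      (.of_forall fun y => (exp_pos _).le)
  have hFTC : (fun x => H x + -H (b + 1)) =ᶠ[atTop] fun x => ∫ y in (b + 1)..x, H' y := by
    filter_upwards [eventually_ge_atTop (b + 1)] with x hx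
    rw [integral_one_sub_div_mul_exp_mul_sq hk.ne' hb hx, sub_eq_add_neg]
  have hH'_top : Tendsto (fun x => ∫ y in (b + 1)..x, H' y) atTop atTop :=
    (tendsto_atTop_add_const_right atTop _ (tendsto_exp_mul_sq_div_atTop hk)).congr' hFTC
  have hWE : (fun y => W y * E y) ~[atTop] H' :=
    hW.isEquivalent_mul_left.trans (isEquivalent_one_sub_div_mul_exp_mul_sq hk).symm
  have hmid : (fun x => ∫ y in (b + 1)..x, W y * E y) ~[atTop] H :=
    (hWE.intervalIntegral_atTop hWE_int
      (fun x hx => intervalIntegrable_one_sub_div_mul_exp_mul_sq hk.ne' hb hx) hH'_nonneg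
      hH'_top).trans <|
      (IsEquivalent.refl.add_const_of_norm_tendsto_atTop hH_top).congr_left hFTC
  refine (hmid.const_add_of_norm_tendsto_atTop (c := ∫ y in Iic (b + 1), W y * E y)
    hH_top).congr_left (.of_forall fun x => ?_)
  simp only [E, ← intervalIntegral.integral_Iic_sub_Iic (hint _) (hint _), add_sub_cancel]

theorem tendsto_sub_mul_exp_neg_mul_sq_mul_integral_Iic (hk : 0 < k) {W : ℝ → ℝ}
    (hW : Tendsto W atTop (𝓝 1))
    (hint : ∀ x, IntegrableOn (fun y => W y * exp (k * (y - b) ^ 2)) (Iic x)) :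
    Tendsto (fun x => (x - b) * exp (-k * (x - b) ^ 2) *
      ∫ y in Iic x, W y * exp (k * (y - b) ^ 2)) atTop (𝓝 (1 / (2 * k))) := by
  refine ((IsEquivalent.refl.mul (isEquivalent_integral_Iic_mul_exp_mul_sq hk hW hint)).congr_right
    ?_).tendsto_const
  filter_upwards [eventually_ne_atTop b] with x hx
  have hxb : x - b ≠ 0 := sub_ne_zero.2 hx
  simp only [Pi.mul_apply, Function.const_apply]
  rw [neg_mul, exp_neg]
  field_simp

end GaussianGrowth

section GaussianDensity

variable {k b : ℝ} {f F : ℝ → ℝ}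

theorem integrable_of_eq_gaussian (hk : 0 < k)
    (hf : ∀ y, f y = √(k / π) * exp (-k * (y - b) ^ 2)) : Integrable f := by
  rw [funext hf]
  exact (integrable_exp_neg_mul_sq_sub hk b).const_mul _

theorem integral_eq_one_of_eq_gaussian (hk : 0 < k)
    (hf : ∀ y, f y = √(k / π) * exp (-k * (y - b) ^ 2)) : ∫ y, f y = 1 := by
  rw [funext hf, integral_const_mul, integral_sub_right_eq_self (fun y => exp (-k * y ^ 2)) b,
    integral_gaussian, ← sqrt_mul (by positivity), div_mul_div_cancel₀ pi_pos.ne',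
    div_self hk.ne', sqrt_one]

theorem integral_Iic_le_of_eq_gaussian (hk : 0 < k)
    (hf : ∀ y, f y = √(k / π) * exp (-k * (y - b) ^ 2)) {y : ℝ} (hy : y ≤ b - 1) :
    ∫ t in Iic y, f t ≤ f y / (2 * k) := by
  simp only [hf]
  rw [integral_const_mul, mul_div_assoc]
  exact mul_le_mul_of_nonneg_left (integral_Iic_exp_neg_mul_sq_sub_le hk hy) (sqrt_nonneg _)

theorem integral_Ioi_le_of_eq_gaussian (hk : 0 < k)
    (hf : ∀ y, f y = √(k / π) * exp (-k * (y - b) ^ 2)) {y : ℝ} (hy : b + 1 ≤ y) :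
    ∫ t in Ioi y, f t ≤ f y / (2 * k) := by
  simp only [hf]
  rw [integral_const_mul, mul_div_assoc]
  exact mul_le_mul_of_nonneg_left (integral_Ioi_exp_neg_mul_sq_sub_le hk hy) (sqrt_nonneg _)

theorem sq_div_mul_le_of_le_div {m v s k : ℝ} (hm : 0 ≤ m) (hmv : m ≤ v / (2 * k))
    (hv : 0 < v) (hs : 0 < s) (hk : 0 < k) : m ^ 2 / (s * v) ≤ v / (4 * k ^ 2 * s) := by
  calc m ^ 2 / (s * v) ≤ (v / (2 * k)) ^ 2 / (s * v) := by gcongr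
    _ = v / (4 * k ^ 2 * s) := by field_simp; ring

theorem integrableOn_Iic_sq_div_of_eq_gaussian (hk : 0 < k) {s : ℝ} (hs : 0 < s)
    (hf : ∀ y, f y = √(k / π) * exp (-k * (y - b) ^ 2))
    (hF : ∀ x, F x = ∫ y in Iic x, f y) (x : ℝ) :
    IntegrableOn (fun y => F y ^ 2 / (s * f y)) (Iic x) := by
  have hf_pos : ∀ y, 0 < f y := fun y => by rw [hf]; positivity
  have hf_int := integrable_of_eq_gaussian hk hf
  have hF_cont : Continuous F := by rw [funext hF]; exact hf_int.continuous_integral_Iic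
  have hf_cont : Continuous f := by rw [funext hf]; fun_prop
  have hg_cont : Continuous fun y => F y ^ 2 / (s * f y) :=
    (hF_cont.pow 2).div (continuous_const.mul hf_cont) fun y => (mul_pos hs (hf_pos y)).ne'
  refine integrableOn_Iic_of_continuous_of_le_atBot hg_cont
    (hf_int.div_const (4 * k ^ 2 * s)) ?_ x
  filter_upwards [eventually_le_atBot (b - 1)] with y hy
  have hF_nonneg : 0 ≤ F y :=
    hF y ▸ setIntegral_nonneg measurableSet_Iic fun t _ => (hf_pos t).le
  rw [Real.norm_of_nonneg (div_nonneg (sq_nonneg _) (mul_pos hs (hf_pos y)).le)]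
  exact sq_div_mul_le_of_le_div hF_nonneg (hF y ▸ integral_Iic_le_of_eq_gaussian hk hf hy)
    (hf_pos y) hs hk

theorem integrableOn_Ioi_one_sub_sq_div_of_eq_gaussian (hk : 0 < k) {s : ℝ} (hs : 0 < s)
    (hf : ∀ y, f y = √(k / π) * exp (-k * (y - b) ^ 2))
    (hF : ∀ x, F x = ∫ y in Iic x, f y) (x : ℝ) :
    IntegrableOn (fun y => (1 - F y) ^ 2 / (s * f y)) (Ioi x) := by
  have hf_pos : ∀ y, 0 < f y := fun y => by rw [hf]; positivity
  have hf_int := integrable_of_eq_gaussian hk hf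
  have hF_cont : Continuous F := by rw [funext hF]; exact hf_int.continuous_integral_Iic
  have hf_cont : Continuous f := by rw [funext hf]; fun_prop
  have h_tail : ∀ y, 1 - F y = ∫ t in Ioi y, f t := fun y => by
    rw [hF y, ← integral_eq_one_of_eq_gaussian hk hf,
      ← intervalIntegral.integral_Iic_add_Ioi hf_int.integrableOn hf_int.integrableOn,
      add_sub_cancel_left]
  have hg_cont : Continuous fun y => (1 - F y) ^ 2 / (s * f y) :=
    ((continuous_const.sub hF_cont).pow 2).div (continuous_const.mul hf_cont)
      fun y => (mul_pos hs (hf_pos y)).ne'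
  refine integrableOn_Ioi_of_continuous_of_le_atTop hg_cont
    (hf_int.div_const (4 * k ^ 2 * s)) ?_ x
  filter_upwards [eventually_ge_atTop (b + 1)] with y hy
  have h_nonneg : 0 ≤ 1 - F y :=
    h_tail y ▸ setIntegral_nonneg measurableSet_Ioi fun t _ => (hf_pos t).le
  rw [Real.norm_of_nonneg (div_nonneg (sq_nonneg _) (mul_pos hs (hf_pos y)).le)]
  exact sq_div_mul_le_of_le_div h_nonneg (h_tail y ▸ integral_Ioi_le_of_eq_gaussian hk hf hy)
    (hf_pos y) hs hk

theorem tendsto_sub_mul_exp_neg_mul_sq_mul_lintegral_of_eq_gaussian {s : ℝ} (hk : 0 < k)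
    (hs : 0 < s) (hf : ∀ y, f y = √(k / π) * exp (-k * (y - b) ^ 2))
    (hF : ∀ x, F x = ∫ y in Iic x, f y) :
    Tendsto (fun x => (x - b) * exp (-k * (x - b) ^ 2) * (∫⁻ y, ENNReal.ofReal
        (((Ioi x).indicator (fun _ => (1 : ℝ)) y - F y) ^ 2 / (s * f y))).toReal)
      atTop (𝓝 ((s * √(k / π))⁻¹ * (1 / (2 * k)))) := by
  have hc : 0 < √(k / π) := by positivity
  have h_integrand : ∀ y, F y ^ 2 * exp (k * (y - b) ^ 2) =
      s * √(k / π) * (F y ^ 2 / (s * f y)) := fun y => by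
    rw [hf, neg_mul, exp_neg]; field_simp
  have hL := integrableOn_Iic_sq_div_of_eq_gaussian hk hs hf hF
  have hR := integrableOn_Ioi_one_sub_sq_div_of_eq_gaussian hk hs hf hF
  have hW : Tendsto (fun y => F y ^ 2) atTop (𝓝 1) := by
    simp only [hF]
    simpa [integral_eq_one_of_eq_gaussian hk hf] using
      (tendsto_integral_Iic_atTop (integrable_of_eq_gaussian hk hf)).pow 2
  have h_left := tendsto_sub_mul_exp_neg_mul_sq_mul_integral_Iic hk hW fun x =>
    IntegrableOn.congr_fun ((hL x).const_mul (s * √(k / π))) (fun y _ => (h_integrand y).symm)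
      measurableSet_Iic
  have h_right := (tendsto_sub_mul_exp_neg_mul_sq_sub_atTop hk b).mul
    (tendsto_integral_Ioi_zero (f := fun y => (1 - F y) ^ 2 / (s * f y)) (μ := volume)
      tendsto_id)
  have h_sum := (h_left.const_mul (s * √(k / π))⁻¹).add h_right
  rw [mul_zero, add_zero] at h_sum
  refine h_sum.congr fun x => ?_
  rw [toReal_lintegral_ofReal_indicator_sub_sq_div (fun y => by rw [hf]; positivity)
    (hL x) (hR x)]
  simp only [h_integrand, integral_const_mul, id]
  field_simp

end GaussianDensity

theorem stmt_13
    (a b σ : ℝ) (ha : 0 < a) (hσ : 0 < σ)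
    (f₀ : ℝ → ℝ)
    (hf₀ : ∀ x, f₀ x = Real.sqrt (a / (Real.pi * σ ^ 2)) *
        Real.exp (-a * (x - b) ^ 2 / σ ^ 2))
    (F₀ : ℝ → ℝ) (hF₀ : ∀ x, F₀ x = ∫ y in Iic x, f₀ y)
    (Φ : ℝ → ℝ≥0∞)
    (hΦ : ∀ x, Φ x = ∫⁻ y, ENNReal.ofReal
        (((Ioi x).indicator (fun _ => (1 : ℝ)) y - F₀ y) ^ 2 / (σ ^ 2 * f₀ y))) :
    Tendsto (fun x => (x - b) * Real.exp (-a * (x - b) ^ 2 / σ ^ 2) * (Φ x).toReal)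
      atTop (𝓝 (σ * Real.sqrt Real.pi / (2 * a ^ ((3 : ℝ) / 2)))) := by
  set k := a / σ ^ 2
  have hexp : ∀ x, -a * (x - b) ^ 2 / σ ^ 2 = -k * (x - b) ^ 2 := fun x => by ring
  have hf₀' : ∀ y, f₀ y = √(k / π) * exp (-k * (y - b) ^ 2) := fun y => by
    rw [hf₀, hexp]; congr 2; ring
  have h_const :
      (σ ^ 2 * √(k / π))⁻¹ * (1 / (2 * k)) = σ * √π / (2 * a ^ ((3 : ℝ) / 2)) := by
    have : 0 < √a := sqrt_pos.2 ha
    have : 0 < √π := sqrt_pos.2 pi_pos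
    simp only [k]
    rw [show (3 : ℝ) / 2 = 1 + 1 / 2 by norm_num, rpow_add ha, Real.rpow_one, ← sqrt_eq_rpow,
      sqrt_div' _ pi_pos.le, sqrt_div' _ (sq_nonneg σ), sqrt_sq hσ.le]
    field_simp
  simp only [hexp, hΦ, ← h_const]
  exact tendsto_sub_mul_exp_neg_mul_sq_mul_lintegral_of_eq_gaussian (by positivity)
    (by positivity) hf₀' hF₀
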